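/- Let S be a sequence of meromorphic functions on a domain D ⊆ ℂ, α an ordinal number, and z₀ ∈ D. Then z₀ is a non-C_α-point of S if and only if z₀ ∈ E_D^(α), where E is the set of non-C₀-points of S in D. -/

import Mathlib

open Filter Set Metric

/-- Iterated (transfinite) derived set of `E` with respect to `A`:
`E_A^(0) = E`, `E_A^(α+1) = (E_A^(α))' ∩ A`, and at limit stages the
intersection over `1 ≤ β < α`. -/
noncomputable def derivIter (A : Set ℂ) (E : Set ℂ) (o : Ordinal) : Set ℂ :=
  Ordinal.limitRecOn o E
    (fun _ ih => {z | z ∈ A ∧ AccPt z (Filter.principal ih)})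
    (fun o _ ih => ⋂ (β : Ordinal) (h : β < o) (_ : 1 ≤ β), ih β h)

/-- The chordal (spherical) distance on the Riemann sphere, with `none` playing the
role of the point at infinity. -/
noncomputable def sphDist : Option ℂ → Option ℂ → ℝ
  | some a, some b =>
      2 * ‖a - b‖ /
        (Real.sqrt (1 + ‖a‖ ^ 2) * Real.sqrt (1 + ‖b‖ ^ 2))
  | some a, none => 2 / Real.sqrt (1 + ‖a‖ ^ 2)
  | none, some b => 2 / Real.sqrt (1 + ‖b‖ ^ 2)
  | none, none => 0

/-- `z₀` is a `C₀`-point of the sequence `S` in `D`: on some disk `Δ(z₀,r) ⊆ D`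
the sequence converges uniformly with respect to the spherical distance
(to a limit function with values in the Riemann sphere). -/
def C0Point (D : Set ℂ) (S : ℕ → ℂ → ℂ) (z₀ : ℂ) : Prop :=
  ∃ r > (0 : ℝ), Metric.ball z₀ r ⊆ D ∧
    ∃ g : ℂ → Option ℂ, ∀ ε > (0 : ℝ), ∃ N : ℕ, ∀ n ≥ N, ∀ z ∈ Metric.ball z₀ r,
      sphDist (some (S n z)) (g z) < ε

/-- `CPoint D S α z₀` : `z₀` is a `C_α`-point of `S` in `D`. At a successor `α`,
every point of some punctured disk `Δ'(z₀,r)` with `Δ(z₀,r) ⊆ D` is a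
`C_{α-1}`-point; at a limit `α`, `z₀` is a `C_β`-point for some `β < α`. -/
noncomputable def CPoint (D : Set ℂ) (S : ℕ → ℂ → ℂ) (α : Ordinal) : ℂ → Prop :=
  Ordinal.limitRecOn α (C0Point D S)
    (fun _ ih => fun z₀ => ∃ r > (0 : ℝ), Metric.ball z₀ r ⊆ D ∧
      ∀ z ∈ Metric.ball z₀ r \ {z₀}, ih z)
    (fun α _ ih => fun z₀ => ∃ β : Ordinal, ∃ h : β < α, ih β h z₀)

/-!
Induction on `α`. At a successor `β + 1`, the point `z₀` is a `C_{β+1}`-point iff all points of a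
punctured neighbourhood are `C_β`-points, i.e. (by the induction hypothesis) iff `z₀` is not an
accumulation point of `E_D^(β)`. At a limit `α` both sides unfold to a statement about all
`β < α`; the only mismatch is `β = 0`, which is excluded from the intersection defining
`E_D^(α)`, and it is covered by `E_D^(1)`, because `E` is closed in `D` (uniform convergence on a
disk makes every point of that disk a `C₀`-point).
-/

open Topology

theorem exists_ball_subset_forall_diff_iff {X : Type*} [PseudoMetricSpace X] {D : Set X}
    (hD : IsOpen D) {x : X} (hx : x ∈ D) {P : X → Prop} :
    (∃ r > 0, ball x r ⊆ D ∧ ∀ z ∈ ball x r \ {x}, P z) ↔ ∀ᶠ z in 𝓝[≠] x, P z := by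
  constructor
  · rintro ⟨r, hr, -, hP⟩
    exact mem_nhdsWithin.mpr ⟨ball x r, isOpen_ball, mem_ball_self hr, fun z hz => hP z hz⟩
  · intro h
    obtain ⟨ε, hε, hεP⟩ := Metric.mem_nhdsWithin_iff.mp h
    obtain ⟨δ, hδ, hδD⟩ := Metric.isOpen_iff.mp hD x hx
    refine ⟨min ε δ, lt_min hε hδ, (ball_subset_ball (min_le_right _ _)).trans hδD, ?_⟩
    exact fun z hz => hεP ⟨ball_subset_ball (min_le_left _ _) hz.1, hz.2⟩

section derivIter

variable (A E : Set ℂ)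

theorem derivIter_zero : derivIter A E 0 = E := by
  simp [derivIter]

theorem derivIter_succ (o : Ordinal) :
    derivIter A E (Order.succ o) = {z | z ∈ A ∧ AccPt z (𝓟 (derivIter A E o))} := by
  simp [derivIter]

theorem derivIter_limit {o : Ordinal} (ho : Order.IsSuccLimit o) :
    derivIter A E o = ⋂ (β : Ordinal) (_ : β < o) (_ : 1 ≤ β), derivIter A E β := by
  rw [derivIter, Ordinal.limitRecOn_limit _ _ _ _ ho]
  rfl

theorem derivIter_one : derivIter A E 1 = {z | z ∈ A ∧ AccPt z (𝓟 E)} := by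
  rw [← zero_add (1 : Ordinal), ← Order.succ_eq_add_one, derivIter_succ, derivIter_zero]

end derivIter

section CPoint

variable {D : Set ℂ} {S : ℕ → ℂ → ℂ}

theorem cPoint_zero : CPoint D S 0 = C0Point D S := by
  simp [CPoint]

theorem cPoint_succ {o : Ordinal} {z₀ : ℂ} :
    CPoint D S (Order.succ o) z₀ ↔
      ∃ r > (0 : ℝ), ball z₀ r ⊆ D ∧ ∀ z ∈ ball z₀ r \ {z₀}, CPoint D S o z := by
  simp [CPoint]

theorem cPoint_limit {o : Ordinal} (ho : Order.IsSuccLimit o) {z₀ : ℂ} :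
    CPoint D S o z₀ ↔ ∃ β < o, CPoint D S β z₀ := by
  rw [CPoint, Ordinal.limitRecOn_limit _ _ _ _ ho]
  exact ⟨fun ⟨β, hβ, h⟩ => ⟨β, hβ, h⟩, fun ⟨β, hβ, h⟩ => ⟨β, hβ, h⟩⟩

theorem cPoint_succ_iff_eventually (hD : IsOpen D) {o : Ordinal} {z₀ : ℂ} (hz₀ : z₀ ∈ D) :
    CPoint D S (Order.succ o) z₀ ↔ ∀ᶠ z in 𝓝[≠] z₀, CPoint D S o z :=
  cPoint_succ.trans (exists_ball_subset_forall_diff_iff hD hz₀)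

theorem isOpen_setOf_c0Point : IsOpen {z | C0Point D S z} := by
  refine Metric.isOpen_iff.mpr fun z₀ ⟨r, hr, hsub, g, hg⟩ => ⟨r, hr, fun w hw => ?_⟩
  have hball : ball w (r - dist w z₀) ⊆ ball z₀ r := ball_subset_ball' (by linarith)
  refine ⟨r - dist w z₀, sub_pos.mpr hw, hball.trans hsub, g, fun ε hε => ?_⟩
  obtain ⟨N, hN⟩ := hg ε hε
  exact ⟨N, fun n hn z hz => hN n hn z (hball hz)⟩

theorem not_c0Point_of_accPt {z₀ : ℂ} (h : AccPt z₀ (𝓟 {z | z ∈ D ∧ ¬ C0Point D S z})) :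
    ¬ C0Point D S z₀ := by
  have hclosed : IsClosed {z | ¬ C0Point D S z} := isOpen_setOf_c0Point.isClosed_compl
  exact hclosed.closure_subset_iff.mpr (fun z hz => hz.2)
    (mem_closure_iff_clusterPt.mpr h.clusterPt)

theorem not_cPoint_iff_mem_derivIter (hD : IsOpen D) (α : Ordinal) {z₀ : ℂ} (hz₀ : z₀ ∈ D) :
    ¬ CPoint D S α z₀ ↔ z₀ ∈ derivIter D {z | z ∈ D ∧ ¬ C0Point D S z} α := by
  set E : Set ℂ := {z | z ∈ D ∧ ¬ C0Point D S z}
  induction α using Ordinal.limitRecOn generalizing z₀ with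
  | zero =>
    rw [cPoint_zero, derivIter_zero]
    exact ⟨fun h => ⟨hz₀, h⟩, And.right⟩
  | add_one β ih =>
    have hnear : ∀ᶠ z in 𝓝[≠] z₀, ¬ CPoint D S β z ↔ z ∈ derivIter D E β :=
      (eventually_nhdsWithin_of_eventually_nhds (hD.eventually_mem hz₀)).mono fun z hz => ih hz
    rw [← Order.succ_eq_add_one, cPoint_succ_iff_eventually hD hz₀, derivIter_succ,
      not_eventually, frequently_congr hnear, ← accPt_iff_frequently_nhdsNE]
    exact ⟨fun h => ⟨hz₀, h⟩, And.right⟩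
  | limit o ho ih =>
    rw [cPoint_limit ho, derivIter_limit _ _ ho]
    simp only [mem_iInter, not_exists, not_and]
    refine ⟨fun h β hβ _ => (ih β hβ hz₀).mp (h β hβ), fun h β hβ => ?_⟩
    rcases eq_or_ne β 0 with rfl | hβ0
    · have h1 := h 1 (Ordinal.one_lt_of_isSuccLimit ho) le_rfl
      rw [derivIter_one] at h1
      rw [cPoint_zero]
      exact not_c0Point_of_accPt h1.2
    · exact (ih β hβ hz₀).mpr (h β hβ (Order.one_le_iff_ne_zero.mpr hβ0))

end CPoint

theorem stmt_14_general (D : Set ℂ) (hD : IsOpen D)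
    (S : ℕ → ℂ → ℂ)
    (α : Ordinal) (z₀ : ℂ) (hz₀ : z₀ ∈ D) :
    ¬ CPoint D S α z₀ ↔ z₀ ∈ derivIter D {z | z ∈ D ∧ ¬ C0Point D S z} α :=
  not_cPoint_iff_mem_derivIter hD α hz₀

theorem stmt_14 (D : Set ℂ) (hD : IsOpen D) (hDc : IsConnected D)
    (S : ℕ → ℂ → ℂ) (hS : ∀ n, MeromorphicOn (S n) D)
    (α : Ordinal) (z₀ : ℂ) (hz₀ : z₀ ∈ D) :
    ¬ CPoint D S α z₀ ↔ z₀ ∈ derivIter D {z | z ∈ D ∧ ¬ C0Point D S z} α :=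
  stmt_14_general D hD S α z₀ hz₀
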